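/- arXiv:0909.3367 — 2 statements merged into one kernel-verified Lean document; each statement's English description precedes it below -/
import Mathlib

section
/- (Additional singularities of Q_{(3:−1)}, Case 16) Let b ∈ ℂ satisfy b^2 + 4b + 7 = 0. Then the point η := (1,1,1,1,1,b,b,−4−b,−4−b,3) ∈ ℂ^{10} satisfies S_1(η) = 0 and there exists μ ∈ ℂ with (∂F_{3,−1}/∂x_i)(η) = μ for all i = 0,…,9; that is, η is a singular point of the hyperquintic Q_{(3:−1)} = {3·S_5 − S_2·S_3 = 0} in ℙ^8(ℂ). -/
/-!
Since `∏ⱼ (1 + xⱼ t) = (1 + xᵢ t) ∏_{j ≠ i} (1 + xⱼ t)`, the partial derivative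
`∂S_{k+1}/∂xᵢ = S_k(x without xᵢ)` equals `∑ⱼ (-xᵢ)ʲ S_{k-j}`. Hence on `S₁ = 0` every partial
derivative of `F_{α,β}` is one and the same quartic in `xᵢ`, with coefficients built from
`S₂, S₃, S₄`. At `η` we have `S₂ = -9` and `S₃ = 24`, and that quartic minus
`μ = 3 S₄ - S₂² - 63` is `3 (t - 1) (t - 3) (t² + 4t + 7)`, which vanishes at every coordinate
value `1, 3, b, -4 - b` of `η`.
-/

open MvPolynomial

namespace Multiset

variable {R : Type*}

theorem esymm_zero [CommSemiring R] (s : Multiset R) : s.esymm 0 = 1 := by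
  simp [esymm]

theorem esymm_zero_succ [CommSemiring R] (k : ℕ) : (0 : Multiset R).esymm (k + 1) = 0 := by
  simp [esymm, powersetCard_zero_right]

theorem esymm_cons_succ [CommSemiring R] (a : R) (s : Multiset R) (k : ℕ) :
    (a ::ₘ s).esymm (k + 1) = a * s.esymm k + s.esymm (k + 1) := by
  simp [esymm, powersetCard_cons, map_map, sum_map_mul_left, add_comm]

theorem esymm_eq_sum_neg_pow_mul_esymm_cons [CommRing R] (a : R) (s : Multiset R) (k : ℕ) :
    s.esymm k = ∑ j ∈ Finset.range (k + 1), (-a) ^ j * (a ::ₘ s).esymm (k - j) := by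
  induction k with
  | zero => simp [esymm_zero]
  | succ k ih =>
    rw [eq_sub_of_add_eq' (esymm_cons_succ a s k).symm, Finset.sum_range_succ' _ (k + 1), ih,
      Finset.mul_sum]
    simp only [Nat.add_sub_add_right, pow_succ, Nat.sub_zero, pow_zero, one_mul]
    rw [sub_eq_add_neg, add_comm, ← Finset.sum_neg_distrib]
    congr 1
    refine Finset.sum_congr rfl fun j _ => ?_
    ring

end Multiset

namespace MvPolynomial

variable {σ R : Type*} [Fintype σ]

theorem eval_esymm_eq_multiset_esymm [CommSemiring R] (x : σ → R) (n : ℕ) :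
    eval x (esymm σ R n) = (Finset.univ.val.map x).esymm n := by
  simp [← coe_aeval_eq_eval, aeval_esymm_eq_multiset_esymm]

theorem pderiv_esymm_map_X_erase [CommSemiring R] [DecidableEq σ] (i : σ) (n : ℕ) :
    pderiv i (((Finset.univ.erase i).val.map (X : σ → MvPolynomial σ R)).esymm n) = 0 := by
  nontriviality R
  rw [Finset.esymm_map_val, map_sum]
  refine Finset.sum_eq_zero fun t ht => pderiv_eq_zero_of_notMem_vars fun hi => ?_
  obtain ⟨j, hj, hij⟩ := Finset.mem_biUnion.mp (vars_prod _ hi)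
  rw [vars_X, Finset.mem_singleton] at hij
  exact Finset.notMem_erase i _ (Finset.mem_powersetCard.mp ht |>.1 (hij ▸ hj))

theorem pderiv_esymm_succ [CommRing R] [DecidableEq σ] (i : σ) (k : ℕ) :
    pderiv i (esymm σ R (k + 1)) = ∑ j ∈ Finset.range (k + 1), (-X i) ^ j * esymm σ R (k - j) := by
  set s := (Finset.univ.erase i).val.map (X : σ → MvPolynomial σ R)
  have hcons : Finset.univ.val.map X = X i ::ₘ s := by
    rw [← Multiset.map_cons, Finset.erase_val, Multiset.cons_erase (Finset.mem_univ i)]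
  have hs : pderiv i (esymm σ R (k + 1)) = s.esymm k := by
    rw [esymm_eq_multiset_esymm, hcons, Multiset.esymm_cons_succ, map_add, Derivation.leibniz,
      pderiv_X_self, pderiv_esymm_map_X_erase, pderiv_esymm_map_X_erase]
    simp
  rw [hs, Multiset.esymm_eq_sum_neg_pow_mul_esymm_cons (X i) s k, ← hcons, esymm_eq_multiset_esymm]

noncomputable def hyperquinticForm (σ R : Type*) [CommSemiring R] [Fintype σ] (α β : R) :
    MvPolynomial σ R :=
  C α * esymm σ R 5 + C β * (esymm σ R 2 * esymm σ R 3)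

theorem eval_pderiv_hyperquinticForm [CommRing R] [DecidableEq σ] {x : σ → R}
    (hx : eval x (esymm σ R 1) = 0) (α β : R) (i : σ) :
    eval x (pderiv i (hyperquinticForm σ R α β)) =
      α * x i ^ 4 + (α + β) * eval x (esymm σ R 2) * x i ^ 2
        - (α + β) * eval x (esymm σ R 3) * x i + α * eval x (esymm σ R 4)
        + β * eval x (esymm σ R 2) ^ 2 := by
  rw [hyperquinticForm, map_add, pderiv_C_mul, pderiv_C_mul, pderiv_mul]
  simp only [pderiv_esymm_succ, Finset.sum_range_succ, Finset.sum_range_zero, Nat.reduceSub,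
    esymm_zero, map_zero, map_add, map_mul, map_pow, map_neg, map_one, eval_C, eval_X]
  linear_combination (β * eval x (esymm σ R 3) - β * x i * eval x (esymm σ R 2) - α * x i ^ 3) * hx

end MvPolynomial

def case16Point (b : ℂ) : Fin 10 → ℂ := ![1, 1, 1, 1, 1, b, b, -4 - b, -4 - b, 3]

theorem map_case16Point_univ_val (b : ℂ) :
    Finset.univ.val.map (case16Point b) =
      1 ::ₘ 1 ::ₘ 1 ::ₘ 1 ::ₘ 1 ::ₘ b ::ₘ b ::ₘ (-4 - b) ::ₘ (-4 - b) ::ₘ 3 ::ₘ 0 :=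
  Fin.univ_val_map _

theorem eval_esymm_case16Point {b : ℂ} (hb : b ^ 2 + 4 * b + 7 = 0) :
    eval (case16Point b) (esymm (Fin 10) ℂ 1) = 0 ∧
      eval (case16Point b) (esymm (Fin 10) ℂ 2) = -9 ∧
      eval (case16Point b) (esymm (Fin 10) ℂ 3) = 24 := by
  simp only [eval_esymm_eq_multiset_esymm, map_case16Point_univ_val, Multiset.esymm_cons_succ,
    Multiset.esymm_zero, Multiset.esymm_zero_succ]
  exact ⟨by ring, by linear_combination -2 * hb, by linear_combination -8 * hb⟩

theorem case16Point_root (b : ℂ) (i : Fin 10) :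
    (case16Point b i - 1) * (case16Point b i - 3) * (case16Point b i - b) *
      (case16Point b i - (-4 - b)) = 0 := by
  fin_cases i <;> simp [case16Point]

/-- **Case 16, additional singularities of `Q_{(3:−1)}`.** If `b² + 4b + 7 = 0`,
then the point `η = (1,1,1,1,1,b,b,−4−b,−4−b,3)` satisfies `S₁(η) = 0` and is a singular point
of the hyperquintic `Q_{(3:−1)} = {3·S₅ − S₂·S₃ = 0}` in `ℙ⁸(ℂ)`. -/
theorem case16_additional_singularity (b : ℂ) (hb : b ^ 2 + 4 * b + 7 = 0) (η : Fin 10 → ℂ)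
    (hη : η = ![1, 1, 1, 1, 1, b, b, -4 - b, -4 - b, 3]) :
    eval η (esymm (Fin 10) ℂ 1) = 0 ∧
    ∃ μ : ℂ, ∀ i, eval η (pderiv i
      (C (3 : ℂ) * esymm (Fin 10) ℂ 5
        + C (-1 : ℂ) * (esymm (Fin 10) ℂ 2 * esymm (Fin 10) ℂ 3))) = μ := by
  obtain rfl : η = case16Point b := hη
  obtain ⟨hS₁, hS₂, hS₃⟩ := eval_esymm_case16Point hb
  refine ⟨hS₁, 3 * eval (case16Point b) (esymm (Fin 10) ℂ 4) - 144, fun i => ?_⟩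
  change eval _ (pderiv i (hyperquinticForm (Fin 10) ℂ 3 (-1))) = _
  rw [eval_pderiv_hyperquinticForm hS₁, hS₂, hS₃]
  linear_combination 3 * case16Point_root b i
    + 3 * (case16Point b i - 1) * (case16Point b i - 3) * hb
end

section
/- (Case 22: singular lines of Q_{(3:−2)}) For all a, b ∈ ℂ, the point η := (a,a,a,b,b,b,−a−b,−a−b,−a−b,0) ∈ ℂ^{10} satisfies S_1(η) = 0 and there exists μ ∈ ℂ with (∂F_{3,−2}/∂x_i)(η) = μ for all i = 0,…,9; that is, the hyperquintic Q_{(3:−2)} = {3·S_5 − 2·S_2·S_3 = 0} in ℙ^8(ℂ) is singular along all such points. -/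
/-! Write `E k = S_k(η)` and `y = η i`. Splitting off the variable `x_i` gives
`S_k = ∂_i S_{k+1} + x_i ∂_i S_k`, so `∂_i S_{k+1}(η) = E k - y ∂_i S_k(η)`; when `E 1 = 0` this yields
`∂_i F_{α,β}(η) = α E 4 + β (E 2)² + y (α y³ + (α + β) (y E 2 - E 3))`.
At the point of the theorem the nonzero coordinates are the roots `a, b, -a-b` of
`y³ + e₂ y - e₃`, where `E 2 = 3 e₂` and `E 3 = 3 e₃`; for `(α, β) = (3, -2)` the last summand is
`3 y (y³ + e₂ y - e₃)`, which vanishes at every coordinate. -/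

open MvPolynomial Finset

namespace Multiset

variable {R : Type*} [CommSemiring R]

@[simp]
theorem esymm_zero_right (s : Multiset R) : s.esymm 0 = 1 := by
  simp [esymm]

@[simp]
theorem esymm_zero_left (k : ℕ) : (0 : Multiset R).esymm (k + 1) = 0 := by
  simp [esymm, powersetCard_zero_right]

@[simp]
theorem esymm_cons (a : R) (s : Multiset R) (k : ℕ) :
    (a ::ₘ s).esymm (k + 1) = a * s.esymm k + s.esymm (k + 1) := by
  simp [esymm, map_map, sum_map_mul_left, add_comm]

end Multiset

namespace MvPolynomial

variable {σ R : Type*}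

section CommSemiring

variable [CommSemiring R]

theorem pderiv_prod_X_of_notMem {i : σ} {s : Finset σ} (hi : i ∉ s) :
    pderiv i (∏ j ∈ s, X j : MvPolynomial σ R) = 0 :=
  Finset.prod_induction _ (fun p => pderiv i p = 0)
    (fun p q hp hq => by simp [Derivation.leibniz, hp, hq]) pderiv_one
    (fun _ hj => pderiv_X_of_ne (ne_of_mem_of_not_mem hj hi))

theorem pderiv_esymm_map_X_of_notMem {i : σ} {s : Finset σ} (hi : i ∉ s) (k : ℕ) :
    pderiv i ((s.val.map X).esymm k : MvPolynomial σ R) = 0 := by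
  rw [esymm_map_val, map_sum]
  exact sum_eq_zero fun t ht => pderiv_prod_X_of_notMem fun h => hi ((mem_powersetCard.1 ht).1 h)

variable [Fintype σ] [DecidableEq σ]

theorem esymm_succ_eq_X_mul_add (i : σ) (k : ℕ) :
    esymm σ R (k + 1) = X i * ((univ.erase i).val.map X).esymm k
      + ((univ.erase i).val.map X).esymm (k + 1) := by
  rw [esymm_eq_multiset_esymm, ← Multiset.cons_erase (mem_univ_val i), Multiset.map_cons,
    Multiset.esymm_cons, erase_val]

theorem pderiv_esymm_succ_s12 (i : σ) (k : ℕ) :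
    pderiv i (esymm σ R (k + 1)) = ((univ.erase i).val.map X).esymm k := by
  rw [esymm_succ_eq_X_mul_add i, map_add, Derivation.leibniz, pderiv_X_self,
    pderiv_esymm_map_X_of_notMem (notMem_erase i _), pderiv_esymm_map_X_of_notMem (notMem_erase i _)]
  simp

theorem esymm_eq_pderiv_esymm_succ_add (i : σ) (k : ℕ) :
    esymm σ R k = pderiv i (esymm σ R (k + 1)) + X i * pderiv i (esymm σ R k) := by
  cases k with
  | zero => simp
  | succ k => rw [pderiv_esymm_succ_s12, pderiv_esymm_succ_s12, esymm_succ_eq_X_mul_add i, add_comm]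

end CommSemiring

section CommRing

variable [CommRing R] [Fintype σ] [DecidableEq σ]

theorem eval_pderiv_esymm_succ (η : σ → R) (i : σ) (k : ℕ) :
    eval η (pderiv i (esymm σ R (k + 1)))
      = eval η (esymm σ R k) - η i * eval η (pderiv i (esymm σ R k)) := by
  have h := congrArg (eval η) (esymm_eq_pderiv_esymm_succ_add (R := R) i k)
  rw [map_add, map_mul, eval_X] at h
  exact eq_sub_of_add_eq h.symm

theorem eval_pderiv_hyperquintic (α β : R) {η : σ → R} (h₁ : eval η (esymm σ R 1) = 0) (i : σ) :
    eval η (pderiv i (C α * esymm σ R 5 + C β * (esymm σ R 2 * esymm σ R 3)))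
      = α * eval η (esymm σ R 4) + β * eval η (esymm σ R 2) ^ 2
        + η i * (α * η i ^ 3 + (α + β) * (η i * eval η (esymm σ R 2) - eval η (esymm σ R 3))) := by
  simp only [map_add, map_mul, Derivation.leibniz, smul_eq_mul, pderiv_C, eval_C,
    eval_pderiv_esymm_succ, esymm_zero, pderiv_one, map_one, map_zero, h₁]
  ring

end CommRing

end MvPolynomial

/-- **Case 22, singular lines of `Q_{(3:−2)}`.** For all `a, b ∈ ℂ`, the point
`η = (a,a,a,b,b,b,−a−b,−a−b,−a−b,0)` satisfies `S₁(η) = 0` and is a singular point of the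
hyperquintic `Q_{(3:−2)} = {3·S₅ − 2·S₂·S₃ = 0}` in `ℙ⁸(ℂ)`. -/
theorem case22_singular_lines (a b : ℂ) (η : Fin 10 → ℂ)
    (hη : η = ![a, a, a, b, b, b, -a - b, -a - b, -a - b, 0]) :
    eval η (esymm (Fin 10) ℂ 1) = 0 ∧
    ∃ μ : ℂ, ∀ i, eval η (pderiv i
      (C (3 : ℂ) * esymm (Fin 10) ℂ 5
        + C (-2 : ℂ) * (esymm (Fin 10) ℂ 2 * esymm (Fin 10) ℂ 3))) = μ := by
  have hE : ∀ k, eval η (esymm (Fin 10) ℂ k) = Multiset.esymm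
      (a ::ₘ a ::ₘ a ::ₘ b ::ₘ b ::ₘ b ::ₘ (-a - b) ::ₘ (-a - b) ::ₘ (-a - b) ::ₘ 0 ::ₘ 0) k :=
    fun k => by
      rw [← aeval_eq_eval, aeval_esymm_eq_multiset_esymm, Fin.univ_val_map, hη]
      rfl
  obtain ⟨h₁, h₂, h₃⟩ : eval η (esymm (Fin 10) ℂ 1) = 0
      ∧ eval η (esymm (Fin 10) ℂ 2) = 3 * (a * b - (a + b) ^ 2)
      ∧ eval η (esymm (Fin 10) ℂ 3) = -3 * (a * b * (a + b)) := by
    refine ⟨?_, ?_, ?_⟩ <;>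
      simp only [hE, Multiset.esymm_cons, Multiset.esymm_zero_right, Multiset.esymm_zero_left] <;>
      ring
  refine ⟨h₁, 3 * eval η (esymm (Fin 10) ℂ 4) - 2 * eval η (esymm (Fin 10) ℂ 2) ^ 2, fun i => ?_⟩
  rw [eval_pderiv_hyperquintic _ _ h₁, h₂, h₃]
  subst hη
  fin_cases i <;> simp <;> ring
end
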